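/- A generalized topological space (X, μ) is sλT_{1/2} if and only if every subset of X is sβ_λ-closed. -/
import Mathlib


open Set

variable {X : Type*}

def IsGT (μ : Set (Set X)) : Prop :=
  ∅ ∈ μ ∧ ∀ S : Set (Set X), S ⊆ μ → ⋃₀ S ∈ μ

def muInt (μ : Set (Set X)) (A : Set X) : Set X := ⋃₀ {U | U ∈ μ ∧ U ⊆ A}

def muCl (μ : Set (Set X)) (A : Set X) : Set X := ⋂₀ {F | Fᶜ ∈ μ ∧ A ⊆ F}

def sOpen (μ : Set (Set X)) (A : Set X) : Prop := A ⊆ muCl μ (muInt μ A)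

def sClosed (μ : Set (Set X)) (A : Set X) : Prop := sOpen μ Aᶜ

def sInt (μ : Set (Set X)) (A : Set X) : Set X := ⋃₀ {U | sOpen μ U ∧ U ⊆ A}

def sCl (μ : Set (Set X)) (A : Set X) : Set X := ⋂₀ {F | sClosed μ F ∧ A ⊆ F}

def sWedge (μ : Set (Set X)) (A : Set X) : Set X := ⋂₀ {U | sOpen μ U ∧ A ⊆ U}

def sVee (μ : Set (Set X)) (A : Set X) : Set X := ⋃₀ {F | sClosed μ F ∧ F ⊆ A}

def sLambdaClosed (μ : Set (Set X)) (A : Set X) : Prop :=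
  ∃ K P : Set X, K = sWedge μ K ∧ sClosed μ P ∧ A = K ∩ P

def sLambdaOpen (μ : Set (Set X)) (A : Set X) : Prop := sLambdaClosed μ Aᶜ

def sclL (μ : Set (Set X)) (A : Set X) : Set X := ⋂₀ {F | sLambdaClosed μ F ∧ A ⊆ F}

def sIntL (μ : Set (Set X)) (A : Set X) : Set X := ⋃₀ {U | sLambdaOpen μ U ∧ U ⊆ A}

def sWedgeL (μ : Set (Set X)) (A : Set X) : Set X := ⋂₀ {U | sLambdaOpen μ U ∧ A ⊆ U}

def sVeeL (μ : Set (Set X)) (A : Set X) : Set X := ⋃₀ {F | sLambdaClosed μ F ∧ F ⊆ A}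

def sgClosed (μ : Set (Set X)) (A : Set X) : Prop :=
  ∀ U : Set X, sLambdaOpen μ U → A ⊆ U → sclL μ A ⊆ U

def sgOpen (μ : Set (Set X)) (A : Set X) : Prop := sgClosed μ Aᶜ

def sBetaClosed (μ : Set (Set X)) (A : Set X) : Prop :=
  ∃ H Q : Set X, H = sWedgeL μ H ∧ sLambdaClosed μ Q ∧ A = H ∩ Q

def sT0 (μ : Set (Set X)) : Prop :=
  ∀ x y : X, x ≠ y → ∃ U : Set X, sLambdaOpen μ U ∧
    ((x ∈ U ∧ y ∉ U) ∨ (y ∈ U ∧ x ∉ U))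

def sT1 (μ : Set (Set X)) : Prop :=
  ∀ x y : X, x ≠ y → ∃ U V : Set X, sLambdaOpen μ U ∧ sLambdaOpen μ V ∧
    x ∈ U ∧ y ∉ U ∧ y ∈ V ∧ x ∉ V


lemma sOpen_sUnion' {μ : Set (Set X)} {S : Set (Set X)} (h : ∀ A ∈ S, sOpen μ A) :
    sOpen μ (⋃₀ S) := by
  intro x hx
  obtain ⟨A, hA, hxA⟩ := hx
  have h1 : muInt μ A ⊆ muInt μ (⋃₀ S) := by
    intro y hy
    obtain ⟨U, ⟨hU, hUA⟩, hyU⟩ := hy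
    exact ⟨U, ⟨hU, hUA.trans (subset_sUnion_of_mem hA)⟩, hyU⟩
  have h2 : muCl μ (muInt μ A) ⊆ muCl μ (muInt μ (⋃₀ S)) := by
    intro y hy F hF
    exact hy F ⟨hF.1, h1.trans hF.2⟩
  exact h2 (h A hA hxA)

lemma sLambdaClosed_sInter' {μ : Set (Set X)} {S : Set (Set X)}
    (h : ∀ A ∈ S, sLambdaClosed μ A) : sLambdaClosed μ (⋂₀ S) := by
  have hex : ∀ A : Set X, ∃ K P : Set X,
      A ∈ S → (K = sWedge μ K ∧ sClosed μ P ∧ A = K ∩ P) := by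
    intro A
    by_cases hA : A ∈ S
    · obtain ⟨K, P, h1, h2, h3⟩ := h A hA
      exact ⟨K, P, fun _ => ⟨h1, h2, h3⟩⟩
    · exact ⟨∅, ∅, fun h' => absurd h' hA⟩
  choose K P hKP using hex
  refine ⟨⋂ A ∈ S, K A, ⋂ A ∈ S, P A, ?_, ?_, ?_⟩
  · apply subset_antisymm
    · intro x hx U hU
      exact hU.2 hx
    · intro x hx
      simp only [mem_iInter]
      intro A hA
      have hKA := (hKP A hA).1
      rw [hKA]
      intro U hU
      refine hx U ⟨hU.1, ?_⟩
      refine Subset.trans ?_ (hKA ▸ hU.2 : K A ⊆ U)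
      intro y hy
      exact (mem_iInter₂.mp hy) A hA
  · show sOpen μ _
    have hc : (⋂ A ∈ S, P A)ᶜ = ⋃₀ {B | ∃ A ∈ S, B = (P A)ᶜ} := by
      ext y
      simp only [mem_compl_iff, mem_iInter, mem_sUnion, mem_setOf_eq, not_forall]
      constructor
      · rintro ⟨A, hA, hy⟩
        exact ⟨(P A)ᶜ, ⟨A, hA, rfl⟩, hy⟩
      · rintro ⟨B, ⟨A, hA, rfl⟩, hy⟩
        exact ⟨A, hA, hy⟩
    rw [hc]
    apply sOpen_sUnion'
    rintro B ⟨A, hA, rfl⟩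
    exact (hKP A hA).2.1
  · ext x
    simp only [mem_sInter, mem_inter_iff, mem_iInter]
    constructor
    · intro hx
      constructor <;> intro A hA <;>
        have := (hKP A hA).2.2 ▸ hx A hA
      · exact this.1
      · exact this.2
    · rintro ⟨h1, h2⟩ A hA
      rw [(hKP A hA).2.2]
      exact ⟨h1 A hA, h2 A hA⟩

lemma sWedgeL_sInter' {μ : Set (Set X)} {S : Set (Set X)}
    (h : ∀ U ∈ S, sLambdaOpen μ U) : ⋂₀ S = sWedgeL μ (⋂₀ S) := by
  apply subset_antisymm
  · intro x hx U hU
    exact hU.2 hx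
  · intro x hx U hU
    exact hx U ⟨h U hU, sInter_subset_of_mem hU⟩

theorem stmt16 (μ : Set (Set X)) (hμ : IsGT μ) :
    (∀ A : Set X, sgClosed μ A → sLambdaClosed μ A) ↔
    (∀ A : Set X, sBetaClosed μ A) := by
  constructor
  · intro h A
    have hsing : ∀ x : X, sLambdaOpen μ {x} ∨ sLambdaClosed μ {x} := by
      intro x
      by_cases hc : sLambdaClosed μ ({x} : Set X)
      · right; exact hc
      · left
        apply h
        intro U hU hsub
        by_cases hxU : x ∈ U
        · have hUuniv : U = univ := by
            apply eq_univ_of_forall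
            intro y
            by_cases hy : y = x
            · exact hy ▸ hxU
            · exact hsub hy
          rw [hUuniv]
          exact subset_univ _
        · have hUeq : U = ({x} : Set X)ᶜ := by
            apply subset_antisymm
            · intro y hy (he : y = x)
              exact hxU (he ▸ hy)
            · exact hsub
          rw [hUeq] at hU
          exact absurd (by rwa [sLambdaOpen, compl_compl] at hU) hc
    refine ⟨⋂₀ {B | ∃ x, x ∉ A ∧ sLambdaClosed μ {x} ∧ B = ({x} : Set X)ᶜ},
            ⋂₀ {B | ∃ x, x ∉ A ∧ sLambdaOpen μ {x} ∧ B = ({x} : Set X)ᶜ}, ?_, ?_, ?_⟩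
    · apply sWedgeL_sInter'
      rintro B ⟨x, _, hx, rfl⟩
      show sLambdaClosed μ ({x} : Set X)ᶜᶜ
      rwa [compl_compl]
    · apply sLambdaClosed_sInter'
      rintro B ⟨x, _, hx, rfl⟩
      exact hx
    · ext y
      simp only [mem_inter_iff, mem_sInter, mem_setOf_eq]
      constructor
      · intro hy
        constructor <;> rintro B ⟨x, hxA, hx, rfl⟩ <;>
          exact fun (he : y = x) => hxA (he ▸ hy)
      · rintro ⟨h1, h2⟩
        by_contra hyA
        rcases hsing y with hy | hy
        · exact h2 ({y} : Set X)ᶜ ⟨y, hyA, hy, rfl⟩ rfl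
        · exact h1 ({y} : Set X)ᶜ ⟨y, hyA, hy, rfl⟩ rfl
  · intro h A hA
    obtain ⟨H, Q, hH, hQ, hHQ⟩ := h A
    have hAH : A ⊆ H := by rw [hHQ]; exact inter_subset_left
    have hAQ : A ⊆ Q := by rw [hHQ]; exact inter_subset_right
    have h1 : sclL μ A ⊆ Q := sInter_subset_of_mem ⟨hQ, hAQ⟩
    have h2 : sclL μ A ⊆ H := by
      rw [hH]
      intro x hx U hU
      exact hA U hU.1 (hAH.trans hU.2) hx
    have heq : A = sclL μ A := by
      apply subset_antisymm
      · intro x hx F hF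
        exact hF.2 hx
      · have h3 := subset_inter h2 h1
        rwa [← hHQ] at h3
    rw [heq]
    exact sLambdaClosed_sInter' (fun F hF => hF.1)
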